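/- Given a Szegő system, for every σ ∈ F_d^+ one has ∑_{τ ⪯ σ} |φ_τ(0)|² = ∏_{τ ⪯ σ} (1 − |γ_τ|²)^{−1}, where the (finite) sum and product are over all words τ ∈ F_d^+ with τ ⪯ σ in the shortlex order. -/

import Mathlib

open scoped BigOperators

/-- The shortlex (length-then-lexicographic) order on words in `F_d^+`. -/
def ShortlexLE {d : ℕ} (σ τ : List (Fin d)) : Prop :=
  σ.length < τ.length ∨ (σ.length = τ.length ∧ (σ = τ ∨ List.Lex (· < ·) σ τ))

/-- The defect `d_σ := √(1 - |γ_σ|²)`. -/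
noncomputable def defect {d : ℕ} (γ : List (Fin d) → ℂ) (σ : List (Fin d)) : ℝ :=
  Real.sqrt (1 - ‖γ σ‖ ^ 2)

/-- A Szegő system: Verblunsky coefficients `γ : F_d^+ → ℂ` with `γ_∅ = 0`, `|γ_σ| < 1`,
together with families of noncommutative polynomials `φ, φr (= φ^#)` with `φ_∅ = φ^#_∅ = 1`
satisfying the Szegő recurrences, where `e : ℕ ≃ F_d^+` is the shortlex order isomorphism and
`τ - 1 := e (e⁻¹ τ - 1)` is the immediate shortlex predecessor. -/
structure SzegoSystem (d : ℕ) where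
  /-- the shortlex enumeration of `F_d^+` -/
  e : ℕ ≃ List (Fin d)
  /-- `e` is an order isomorphism onto the shortlex order -/
  he : ∀ m n : ℕ, m ≤ n ↔ ShortlexLE (e m) (e n)
  /-- the Verblunsky coefficients -/
  γ : List (Fin d) → ℂ
  hγ0 : γ [] = 0
  hγlt : ∀ σ : List (Fin d), ‖γ σ‖ < 1
  /-- the orthonormal polynomials -/
  φ : List (Fin d) → FreeAlgebra ℂ (Fin d)
  /-- the reverse polynomials `φ^#` -/
  φr : List (Fin d) → FreeAlgebra ℂ (Fin d)
  hφ0 : φ [] = 1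
  hφr0 : φr [] = 1
  recφ : ∀ (k : Fin d) (σ : List (Fin d)),
    φ (k :: σ) = (((defect γ (k :: σ) : ℝ) : ℂ))⁻¹ •
      (FreeAlgebra.ι ℂ k * φ σ - γ (k :: σ) • φr (e (e.symm (k :: σ) - 1)))
  recφr : ∀ (k : Fin d) (σ : List (Fin d)),
    φr (k :: σ) = (((defect γ (k :: σ) : ℝ) : ℂ))⁻¹ •
      ((-(starRingEnd ℂ (γ (k :: σ)))) • (FreeAlgebra.ι ℂ k * φ σ) +
        φr (e (e.symm (k :: σ) - 1)))

/-- Evaluation of a noncommutative polynomial at `0` (the constant coefficient). -/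
noncomputable def evalZero (d : ℕ) : FreeAlgebra ℂ (Fin d) →ₐ[ℂ] ℂ :=
  FreeAlgebra.lift ℂ (fun _ : Fin d => (0 : ℂ))

/-- The shortlex-largest word of length `n`: the largest generator repeated `n` times. -/
def sigmaWord (d : ℕ) (hd : 1 ≤ d) (n : ℕ) : List (Fin d) :=
  List.replicate n (⟨d - 1, by omega⟩ : Fin d)

/-!
At `0` the generators vanish, so the Szegő recurrences reduce to
`φ^#_τ(0) = d_τ⁻¹ φ^#_{τ-1}(0)` and `φ_τ(0) = -d_τ⁻¹ γ_τ φ^#_{τ-1}(0)`. Hence `|φ^#_τ(0)|²` is the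
partial product `P_τ = ∏_{ρ ⪯ τ} (1 - |γ_ρ|²)⁻¹`, and `|φ_τ(0)|² = |γ_τ|² (1 - |γ_τ|²)⁻¹ P_{τ-1}`
equals `P_τ - P_{τ-1}`, so the sum of the `|φ_τ(0)|²` telescopes.
-/

namespace SzegoSystem

variable {d : ℕ} (S : SzegoSystem d)

lemma e_zero : S.e 0 = [] := by
  have h : ShortlexLE (S.e (S.e.symm [])) (S.e 0) := by
    rw [Equiv.apply_symm_apply]
    cases h : S.e 0 with
    | nil => exact Or.inr ⟨rfl, Or.inl rfl⟩
    | cons a l => exact Or.inl (by simp)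
  rw [← Nat.le_zero.mp ((S.he _ 0).2 h), Equiv.apply_symm_apply]

lemma exists_e_succ_eq_cons (n : ℕ) :
    ∃ k σ, S.e (n + 1) = k :: σ ∧ S.e (S.e.symm (k :: σ) - 1) = S.e n := by
  cases h : S.e (n + 1) with
  | nil => exact absurd (S.e.injective (h.trans S.e_zero.symm)) n.succ_ne_zero
  | cons k σ => exact ⟨k, σ, rfl, by rw [← h, Equiv.symm_apply_apply, Nat.add_sub_cancel]⟩

lemma one_sub_norm_sq_pos (τ : List (Fin d)) : 0 < 1 - ‖S.γ τ‖ ^ 2 := by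
  nlinarith [S.hγlt τ, norm_nonneg (S.γ τ)]

lemma norm_sq_inv_defect (τ : List (Fin d)) :
    ‖((defect S.γ τ : ℝ) : ℂ)⁻¹‖ ^ 2 = (1 - ‖S.γ τ‖ ^ 2)⁻¹ := by
  rw [norm_inv, Complex.norm_real, Real.norm_eq_abs, inv_pow, sq_abs, defect,
    Real.sq_sqrt (S.one_sub_norm_sq_pos τ).le]

lemma evalZero_φr_succ (n : ℕ) :
    evalZero d (S.φr (S.e (n + 1))) =
      ((defect S.γ (S.e (n + 1)) : ℝ) : ℂ)⁻¹ * evalZero d (S.φr (S.e n)) := by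
  obtain ⟨k, σ, hcons, hpred⟩ := S.exists_e_succ_eq_cons n
  simp [hcons, S.recφr, hpred, evalZero]

lemma evalZero_φ_succ (n : ℕ) :
    evalZero d (S.φ (S.e (n + 1))) =
      -(((defect S.γ (S.e (n + 1)) : ℝ) : ℂ)⁻¹ * S.γ (S.e (n + 1)) *
        evalZero d (S.φr (S.e n))) := by
  obtain ⟨k, σ, hcons, hpred⟩ := S.exists_e_succ_eq_cons n
  simp [hcons, S.recφ, hpred, evalZero, mul_assoc]

lemma norm_sq_evalZero_φr (n : ℕ) :
    ‖evalZero d (S.φr (S.e n))‖ ^ 2 =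
      ∏ j ∈ Finset.range (n + 1), (1 - ‖S.γ (S.e j)‖ ^ 2)⁻¹ := by
  induction n with
  | zero => simp [S.e_zero, S.hφr0, S.hγ0]
  | succ n ih =>
    rw [S.evalZero_φr_succ, norm_mul, mul_pow, S.norm_sq_inv_defect, ih,
      Finset.prod_range_succ _ (n + 1), mul_comm]

lemma norm_sq_evalZero_φ_succ (n : ℕ) :
    ‖evalZero d (S.φ (S.e (n + 1)))‖ ^ 2 =
      ∏ j ∈ Finset.range (n + 2), (1 - ‖S.γ (S.e j)‖ ^ 2)⁻¹ -
        ∏ j ∈ Finset.range (n + 1), (1 - ‖S.γ (S.e j)‖ ^ 2)⁻¹ := by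
  have hpos := S.one_sub_norm_sq_pos (S.e (n + 1))
  rw [S.evalZero_φ_succ, norm_neg, norm_mul, norm_mul, mul_pow, mul_pow, S.norm_sq_inv_defect,
    S.norm_sq_evalZero_φr, Finset.prod_range_succ _ (n + 1)]
  field_simp
  ring

end SzegoSystem

theorem sum_sq_at_zero_eq_prod_general {d : ℕ} (S : SzegoSystem d) (σ : List (Fin d)) :
    ∑ j ∈ Finset.range (S.e.symm σ + 1), ‖evalZero d (S.φ (S.e j))‖ ^ 2 =
      ∏ j ∈ Finset.range (S.e.symm σ + 1), (1 - ‖S.γ (S.e j)‖ ^ 2)⁻¹ := by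
  induction S.e.symm σ with
  | zero => simp [S.e_zero, S.hφ0, S.hγ0]
  | succ n ih => rw [Finset.sum_range_succ, ih, S.norm_sq_evalZero_φ_succ, add_sub_cancel]

/-- for every `σ ∈ F_d^+`,
`∑_{τ ⪯ σ} |φ_τ(0)|² = ∏_{τ ⪯ σ} (1 − |γ_τ|²)⁻¹`, the sum and product being over all words
`τ ⪯ σ` in the shortlex order (enumerated by `e`). -/
theorem sum_sq_at_zero_eq_prod {d : ℕ} (hd : 1 ≤ d) (S : SzegoSystem d) (σ : List (Fin d)) :
    ∑ j ∈ Finset.range (S.e.symm σ + 1), ‖evalZero d (S.φ (S.e j))‖ ^ 2 =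
      ∏ j ∈ Finset.range (S.e.symm σ + 1), (1 - ‖S.γ (S.e j)‖ ^ 2)⁻¹ :=
  sum_sq_at_zero_eq_prod_general S σ
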